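/- arXiv:1401.6609 — 3 statements merged into one kernel-verified Lean document; each statement's English description precedes it below -/
import Mathlib

section
/- A matrix A ∈ ℂ^{m₁m₂ × n₁n₂} can be written as a Kronecker product A = U ⊗ V with U ∈ ℂ^{m₁×n₁}, V ∈ ℂ^{m₂×n₂} if and only if its realignment ℛ(A) has rank at most 1. -/
open Matrix Kronecker

/-- Realignment: row `(i,j)` of `realign A` is `vec(A_{ij})ᵀ` (column-stacking `vec`). -/
def realign {m₁ m₂ n₁ n₂ : ℕ} (A : Matrix (Fin m₁ × Fin m₂) (Fin n₁ × Fin n₂) ℂ) :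
    Matrix (Fin m₁ × Fin n₁) (Fin n₂ × Fin m₂) ℂ :=
  Matrix.of fun p q => A (p.1, q.2) (p.2, q.1)

lemma rank_le_one_iff_exists_vecMulVec {m n : Type*} [Fintype m] [Fintype n] [DecidableEq n]
    (M : Matrix m n ℂ) :
    M.rank ≤ 1 ↔ ∃ (u : m → ℂ) (v : n → ℂ), M = Matrix.vecMulVec u v := by
  constructor
  · intro h
    have hP : (LinearMap.range M.mulVecLin).IsPrincipal := by
      rw [← Submodule.finrank_le_one_iff_isPrincipal]
      exact h
    obtain ⟨u, hu⟩ := hP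
    have hcol : ∀ j, ∃ c : ℂ, (fun i => M i j) = c • u := by
      intro j
      have hmem : (fun i => M i j) ∈ LinearMap.range M.mulVecLin := by
        refine ⟨Pi.single j 1, ?_⟩
        ext i
        simp [Matrix.mulVecLin_apply, Matrix.mulVec_single]
      rw [hu, Submodule.mem_span_singleton] at hmem
      obtain ⟨c, hc⟩ := hmem
      exact ⟨c, hc.symm⟩
    choose v hv using hcol
    refine ⟨u, v, ?_⟩
    ext i j
    have := congrFun (hv j) i
    simp only [Pi.smul_apply, smul_eq_mul] at this
    simp [Matrix.vecMulVec_apply, this, mul_comm]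
  · rintro ⟨u, v, rfl⟩
    rw [Matrix.vecMulVec_eq (Unit)]
    calc (Matrix.replicateCol Unit u * Matrix.replicateRow Unit v).rank
        ≤ (Matrix.replicateRow Unit v).rank := Matrix.rank_mul_le_right _ _
      _ ≤ Fintype.card Unit := Matrix.rank_le_card_height _
      _ = 1 := Fintype.card_unit

/-- `A ∈ ℂ^{m₁m₂ × n₁n₂}` is a Kronecker product `U ⊗ₖ V` with
`U ∈ ℂ^{m₁×n₁}`, `V ∈ ℂ^{m₂×n₂}` iff its realignment has rank at most 1. -/
theorem kronecker_decomposable_iff_realign_rank_le_one {m₁ m₂ n₁ n₂ : ℕ}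
    (A : Matrix (Fin m₁ × Fin m₂) (Fin n₁ × Fin n₂) ℂ) :
    (∃ (U : Matrix (Fin m₁) (Fin n₁) ℂ) (V : Matrix (Fin m₂) (Fin n₂) ℂ),
        A = U ⊗ₖ V) ↔ (realign A).rank ≤ 1 := by
  rw [rank_le_one_iff_exists_vecMulVec]
  constructor
  · rintro ⟨U, V, rfl⟩
    refine ⟨fun p => U p.1 p.2, fun q => V q.2 q.1, ?_⟩
    ext ⟨i, k⟩ ⟨l, j⟩
    simp [realign, Matrix.vecMulVec_apply, Matrix.kroneckerMap_apply]
  · rintro ⟨u, v, huv⟩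
    refine ⟨Matrix.of fun i k => u (i, k), Matrix.of fun j l => v (l, j), ?_⟩
    ext ⟨i, j⟩ ⟨k, l⟩
    have := congrFun (congrFun huv (i, k)) (l, j)
    simp only [realign, Matrix.vecMulVec_apply, Matrix.of_apply] at this
    simp [Matrix.kroneckerMap_apply, this]
end

section
/- An MN×MN invertible complex matrix A can be expressed as the Kronecker product of an M×M invertible matrix and an N×N invertible matrix if and only if the realignment ℛ(A) (with respect to the factorization MN = M·N) has rank exactly 1. -/
open Matrix Kronecker

/-!
Realignment is a bijection taking `U ⊗ₖ V` to the outer product of `vec U` and `vec Vᵀ`, so `A` is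
a Kronecker product exactly when `ℛ(A)` is an outer product `u vᵀ`. Over a field the nonzero outer
products are exactly the rank-one matrices. Since `det (U ⊗ₖ V) = det U ^ N * det V ^ M`, the
factors of an invertible Kronecker product are invertible, and invertible factors are nonzero.
-/

namespace Matrix

variable {K : Type*} [Field K] {m n : Type*}

theorem vecMulVec_eq_zero_iff {α : Type*} [MulZeroClass α] [NoZeroDivisors α] {u : m → α}
    {v : n → α} : vecMulVec u v = 0 ↔ u = 0 ∨ v = 0 := by
  simp only [← ext_iff, vecMulVec_apply, zero_apply, mul_eq_zero, funext_iff, Pi.zero_apply,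
    forall_or_left, forall_or_right]

theorem rank_eq_zero_iff [Fintype n] [DecidableEq n] {A : Matrix m n K} : A.rank = 0 ↔ A = 0 := by
  rw [rank, Submodule.finrank_eq_zero, LinearMap.range_eq_bot, ← toLin'_apply',
    LinearEquiv.map_eq_zero_iff]

theorem exists_eq_vecMulVec_of_rank_eq_one [Fintype n] {A : Matrix m n K} (h : A.rank = 1) :
    ∃ (u : m → K) (v : n → K), A = vecMulVec u v := by
  classical
  obtain ⟨w, -, hw⟩ := finrank_eq_one_iff'.mp h
  have hcol : ∀ j, ∃ c : K, c • w.1 = A.col j := fun j => by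
    obtain ⟨c, hc⟩ := hw ⟨A *ᵥ Pi.single j 1, Pi.single j 1, rfl⟩
    exact ⟨c, by simpa [mulVec_single] using congrArg Subtype.val hc⟩
  choose v hv using hcol
  refine ⟨w.1, v, ext fun i j => ?_⟩
  rw [vecMulVec_apply, mul_comm, ← col_apply A j i, ← hv j, Pi.smul_apply, smul_eq_mul]

theorem rank_eq_one_iff_exists_vecMulVec [Fintype n] [DecidableEq n] {A : Matrix m n K} :
    A.rank = 1 ↔ ∃ (u : m → K) (v : n → K), u ≠ 0 ∧ v ≠ 0 ∧ A = vecMulVec u v := by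
  constructor
  · intro h
    obtain ⟨u, v, rfl⟩ := exists_eq_vecMulVec_of_rank_eq_one h
    have hne : vecMulVec u v ≠ 0 := fun h0 => by
      rw [h0, rank_zero] at h
      exact zero_ne_one h
    rw [Ne, vecMulVec_eq_zero_iff, not_or] at hne
    exact ⟨u, v, hne.1, hne.2, rfl⟩
  · rintro ⟨u, v, hu, hv, rfl⟩
    refine le_antisymm (rank_vecMulVec_le u v) (Nat.one_le_iff_ne_zero.mpr ?_)
    rw [Ne, rank_eq_zero_iff, vecMulVec_eq_zero_iff, not_or]
    exact ⟨hu, hv⟩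

variable {R : Type*} [CommRing R] [Fintype m] [Fintype n] [DecidableEq m] [DecidableEq n]

theorem IsUnit.of_kronecker_left [Nonempty n] {U : Matrix m m R} {V : Matrix n n R}
    (h : IsUnit (U ⊗ₖ V)) : IsUnit U := by
  rw [isUnit_iff_isUnit_det, det_kronecker] at h
  rw [isUnit_iff_isUnit_det, ← isUnit_pow_iff (Fintype.card_ne_zero (α := n))]
  exact isUnit_of_mul_isUnit_left h

theorem IsUnit.of_kronecker_right [Nonempty m] {U : Matrix m m R} {V : Matrix n n R}
    (h : IsUnit (U ⊗ₖ V)) : IsUnit V := by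
  rw [isUnit_iff_isUnit_det, det_kronecker] at h
  rw [isUnit_iff_isUnit_det, ← isUnit_pow_iff (Fintype.card_ne_zero (α := m))]
  exact isUnit_of_mul_isUnit_right h

end Matrix

theorem realign_injective {m₁ m₂ n₁ n₂ : ℕ} :
    Function.Injective (realign : Matrix (Fin m₁ × Fin m₂) (Fin n₁ × Fin n₂) ℂ → _) :=
  fun _ _ h => ext fun ⟨i, j⟩ ⟨k, l⟩ => congr_fun₂ h (i, k) (l, j)

theorem realign_kronecker {M N : ℕ} (U : Matrix (Fin M) (Fin M) ℂ) (V : Matrix (Fin N) (Fin N) ℂ) :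
    realign (U ⊗ₖ V) = vecMulVec (Function.uncurry U) (Function.uncurry Vᵀ) :=
  rfl

/-- Lemma 2: an invertible `MN×MN` complex matrix `A` is a Kronecker
product of an invertible `M×M` matrix and an invertible `N×N` matrix iff `ℛ(A)` has
rank exactly 1. -/
theorem invertible_kronecker_decomposable_iff_realign_rank_one {M N : ℕ}
    (hM : 0 < M) (hN : 0 < N)
    (A : Matrix (Fin M × Fin N) (Fin M × Fin N) ℂ) (hA : IsUnit A) :
    (∃ (U : Matrix (Fin M) (Fin M) ℂ) (V : Matrix (Fin N) (Fin N) ℂ),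
        IsUnit U ∧ IsUnit V ∧ A = U ⊗ₖ V) ↔ (realign A).rank = 1 := by
  have : NeZero M := ⟨hM.ne'⟩
  have : NeZero N := ⟨hN.ne'⟩
  rw [rank_eq_one_iff_exists_vecMulVec]
  constructor
  · rintro ⟨U, V, hU, hV, rfl⟩
    refine ⟨_, _, ?_, ?_, realign_kronecker U V⟩
    · exact Function.uncurry_injective.ne hU.ne_zero
    · exact Function.uncurry_injective.ne (transpose_eq_zero.not.mpr hV.ne_zero)
  · rintro ⟨u, v, -, -, huv⟩
    set U := of (Function.curry u)
    set V := (of (Function.curry v))ᵀ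
    -- `uncurry (curry f)` and `f` agree definitionally, by eta for pairs
    have hA_eq : A = U ⊗ₖ V := realign_injective (huv.trans (realign_kronecker U V).symm)
    rw [hA_eq] at hA
    exact ⟨U, V, hA.of_kronecker_left, hA.of_kronecker_right, hA_eq⟩
end

section
/- For any positive integers M and N, the set of MN×MN matrices that are Kronecker products A ⊗ B of an M×M matrix and an N×N matrix is closed in ℂ^{MN×MN}, and the subset GL(M,ℂ) ⊗ GL(N,ℂ) of invertible such products forms a subgroup of GL(MN,ℂ). -/
open Matrix Kronecker

/-
The entries of `A ⊗ₖ B` are the products `A i j * B k r`, so after regrouping the indices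
(the realignment of Van Loan and Pitsianis) a Kronecker product becomes the outer product
`vec A ⬝ (vec B)ᵀ`. Hence the Kronecker products are exactly the matrices whose realignment has
rank at most one, i.e. all of whose realigned 2×2 minors vanish: a closed condition.
Products and inverses of Kronecker products are computed factorwise.
-/

namespace Matrix

section OuterProduct

variable {K ι κ : Type*} [Field K]

theorem exists_eq_vecMulVec_iff {X : Matrix ι κ K} :
    (∃ u v, X = vecMulVec u v) ↔ ∀ i i' j j', X i j * X i' j' = X i j' * X i' j := by
  constructor
  · rintro ⟨u, v, rfl⟩ i i' j j'
    simp only [vecMulVec_apply]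
    ring
  · intro hminors
    by_cases hX : X = 0
    · exact ⟨0, 0, by simp [hX]⟩
    obtain ⟨i₀, j₀, hpivot⟩ : ∃ i j, X i j ≠ 0 := by
      by_contra! h
      exact hX (ext h)
    refine ⟨fun i => X i j₀, fun j => X i₀ j / X i₀ j₀, ext fun i j => ?_⟩
    rw [vecMulVec_apply, mul_div_assoc', eq_div_iff hpivot]
    linear_combination hminors i i₀ j j₀

theorem isClosed_setOf_exists_eq_vecMulVec [TopologicalSpace K] [ContinuousMul K] [T2Space K] :
    IsClosed {X : Matrix ι κ K | ∃ u v, X = vecMulVec u v} := by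
  simp only [exists_eq_vecMulVec_iff, Set.ofPred_forall]
  refine isClosed_iInter fun i => isClosed_iInter fun i' => isClosed_iInter fun j =>
    isClosed_iInter fun j' => isClosed_eq ?_ ?_ <;> fun_prop

end OuterProduct

section Realignment

variable {α l m n p : Type*}

def realign (C : Matrix (l × n) (m × p) α) : Matrix (m × l) (p × n) α :=
  of fun x y => C (x.2, y.2) (x.1, y.1)

theorem realign_kronecker [Mul α] (A : Matrix l m α) (B : Matrix n p α) :
    realign (A ⊗ₖ B) = vecMulVec (vec A) (vec B) :=
  rfl

theorem realign_injective : Function.Injective (realign : Matrix (l × n) (m × p) α → _) :=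
  fun _ _ h => ext fun ⟨i, k⟩ ⟨j, r⟩ => congr_fun₂ h (j, i) (r, k)

theorem continuous_realign [TopologicalSpace α] :
    Continuous (realign : Matrix (l × n) (m × p) α → _) := by
  unfold realign
  fun_prop

theorem exists_eq_kronecker_iff [Mul α] {C : Matrix (l × n) (m × p) α} :
    (∃ (A : Matrix l m α) (B : Matrix n p α), C = A ⊗ₖ B) ↔
      ∃ u v, realign C = vecMulVec u v := by
  constructor
  · rintro ⟨A, B, rfl⟩
    exact ⟨vec A, vec B, realign_kronecker A B⟩
  · rintro ⟨u, v, h⟩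
    obtain ⟨A, rfl⟩ := vec_bijective.surjective u
    obtain ⟨B, rfl⟩ := vec_bijective.surjective v
    exact ⟨A, B, realign_injective (h.trans (realign_kronecker A B).symm)⟩

end Realignment

theorem isClosed_setOf_exists_eq_kronecker {K l m n p : Type*} [Field K] [TopologicalSpace K]
    [ContinuousMul K] [T2Space K] :
    IsClosed {C : Matrix (l × n) (m × p) K | ∃ (A : Matrix l m K) (B : Matrix n p K),
      C = A ⊗ₖ B} := by
  simp only [exists_eq_kronecker_iff]
  exact isClosed_setOf_exists_eq_vecMulVec.preimage continuous_realign

end Matrix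

/-- the set of `MN×MN` matrices that are Kronecker products `A ⊗ₖ B` of an
`M×M` matrix and an `N×N` matrix is closed in `ℂ^{MN×MN}`, and the set
`GL(M,ℂ) ⊗ GL(N,ℂ)` of invertible such products is a subgroup of `GL(MN,ℂ)`: it contains
the identity and is closed under products and inverses. -/
theorem kronecker_products_closed_and_subgroup (M N : ℕ) :
    IsClosed {C : Matrix (Fin M × Fin N) (Fin M × Fin N) ℂ |
      ∃ (A : Matrix (Fin M) (Fin M) ℂ) (B : Matrix (Fin N) (Fin N) ℂ), C = A ⊗ₖ B} ∧
    (∃ (A : Matrix (Fin M) (Fin M) ℂ) (B : Matrix (Fin N) (Fin N) ℂ),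
      IsUnit A ∧ IsUnit B ∧ (1 : Matrix (Fin M × Fin N) (Fin M × Fin N) ℂ) = A ⊗ₖ B) ∧
    (∀ C₁ C₂ : Matrix (Fin M × Fin N) (Fin M × Fin N) ℂ,
      (∃ A B, IsUnit A ∧ IsUnit B ∧ C₁ = A ⊗ₖ B) →
      (∃ A B, IsUnit A ∧ IsUnit B ∧ C₂ = A ⊗ₖ B) →
      ∃ (A : Matrix (Fin M) (Fin M) ℂ) (B : Matrix (Fin N) (Fin N) ℂ),
        IsUnit A ∧ IsUnit B ∧ C₁ * C₂ = A ⊗ₖ B) ∧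
    (∀ C : Matrix (Fin M × Fin N) (Fin M × Fin N) ℂ,
      (∃ A B, IsUnit A ∧ IsUnit B ∧ C = A ⊗ₖ B) →
      ∃ (A : Matrix (Fin M) (Fin M) ℂ) (B : Matrix (Fin N) (Fin N) ℂ),
        IsUnit A ∧ IsUnit B ∧ C⁻¹ = A ⊗ₖ B) := by
  refine ⟨isClosed_setOf_exists_eq_kronecker, ⟨1, 1, isUnit_one, isUnit_one, one_kronecker_one.symm⟩,
    ?_, ?_⟩
  · rintro C₁ C₂ ⟨A₁, B₁, hA₁, hB₁, rfl⟩ ⟨A₂, B₂, hA₂, hB₂, rfl⟩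
    exact ⟨A₁ * A₂, B₁ * B₂, hA₁.mul hA₂, hB₁.mul hB₂, (mul_kronecker_mul A₁ A₂ B₁ B₂).symm⟩
  · rintro C ⟨A, B, hA, hB, rfl⟩
    exact ⟨A⁻¹, B⁻¹, isUnit_nonsing_inv_iff.mpr hA, isUnit_nonsing_inv_iff.mpr hB,
      inv_kronecker A B⟩
end
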